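/- Order weak compositions of k with t parts by: a = (a_t,…,a_1) ⪰ b = (b_t,…,b_1) iff a = b or the first nonzero entry of (a_t - b_t, …, a_1 - b_1) (reading from index t down) is negative. Define the matrix entry α(λ, μ) = (-1)^{d-μ_t} ∏_{s=0}^{t-2} binom(∑_{j=1}^{s}(λ_j+μ_j)+μ_{s+1}+2s, ∑_{j=1}^{s}(λ_j+μ_j)+λ_{s+1}+2s) for weak compositions λ, μ of d-t+1 with t parts. Then α(λ, μ) = 0 whenever λ ⪰ μ and λ ≠ μ, and α(λ, λ) = (-1)^{d-λ_t}. In particular the matrix (α(λ,μ)) is upper triangular with respect to this total order, with all diagonal entries equal to ±1, and hence invertible over the integers. -/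
import Mathlib


open Finset

/-- Generalized binomial coefficient `binom(a, b)` for integers `a, b`:
`a(a-1)⋯(a-b+1)/b!` when `b ≥ 0`, and `0` when `b < 0`. -/
noncomputable def zbinom (a b : ℤ) : ℤ := if 0 ≤ b then Ring.choose a b.toNat else 0

/-- `S(s) = ∑_{m=1}^{s} (μ_m + λ_m)`. -/
def Sfun (lam mu : ℕ → ℕ) (s : ℕ) : ℤ := ∑ m ∈ Finset.Icc 1 s, ((mu m : ℤ) + (lam m : ℤ))

/-- `A_k(λ,μ) = ∏_{s=0}^{k-2} binom(S(s)+μ_{s+1}+2s, S(s)+λ_{s+1}+2s)`. -/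
noncomputable def Afun (lam mu : ℕ → ℕ) (k : ℕ) : ℤ :=
  ∏ s ∈ Finset.range (k - 1),
    zbinom (Sfun lam mu s + (mu (s+1) : ℤ) + 2 * s) (Sfun lam mu s + (lam (s+1) : ℤ) + 2 * s)

/-- `B_k(λ,μ) = ∏_{s=k+1}^{t-1} binom(S(s-1)+μ_s+μ_{s+1}+2s-1, S(s)+2s-1)`. -/
noncomputable def Bfun (t : ℕ) (lam mu : ℕ → ℕ) (k : ℕ) : ℤ :=
  ∏ s ∈ Finset.Icc (k + 1) (t - 1),
    zbinom (Sfun lam mu (s - 1) + (mu s : ℤ) + (mu (s+1) : ℤ) + 2 * s - 1)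
      (Sfun lam mu s + 2 * s - 1)

/-- `g_k(λ,μ;z) = binom(S(k-1)+μ_k+2(k-1), S(k-1)+λ_k-z+2(k-1))`. -/
noncomputable def gfun (lam mu : ℕ → ℕ) (k : ℕ) (z : ℤ) : ℤ :=
  zbinom (Sfun lam mu (k - 1) + (mu k : ℤ) + 2 * ((k : ℤ) - 1))
    (Sfun lam mu (k - 1) + (lam k : ℤ) - z + 2 * ((k : ℤ) - 1))

/-- `h_k(λ,μ;z) = binom(S(k)+μ_{k+1}-z+2(k-1)+2, S(k)+2(k-1)+1)`. -/
noncomputable def hfun (lam mu : ℕ → ℕ) (k : ℕ) (z : ℤ) : ℤ :=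
  zbinom (Sfun lam mu k + (mu (k+1) : ℤ) - z + 2 * ((k : ℤ) - 1) + 2)
    (Sfun lam mu k + 2 * ((k : ℤ) - 1) + 1)

/-- The entry of the matrix of `α_{d-t+1}` at the pair of weak compositions `(λ, μ)`:
`α(λ,μ) = (-1)^{d-μ_t} ∏_{s=0}^{t-2} binom(∑_{j≤s}(λ_j+μ_j)+μ_{s+1}+2s,
∑_{j≤s}(λ_j+μ_j)+λ_{s+1}+2s)`. -/
noncomputable def Amat (d t : ℕ) (lam mu : ℕ → ℕ) : ℤ :=
  (-1 : ℤ) ^ (d - mu t) * Afun lam mu t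

/-- The order `a ⪰ b` on weak compositions with `t` parts (indexed `a_t, …, a_1`):
`a = b`, or the first nonzero entry of `(a_t - b_t, …, a_1 - b_1)`, reading from
index `t` down, is negative. -/
def succeq (t : ℕ) (a b : ℕ → ℕ) : Prop :=
  (∀ j ∈ Finset.Icc 1 t, a j = b j) ∨
    ∃ j ∈ Finset.Icc 1 t, a j < b j ∧ ∀ i ∈ Finset.Icc 1 t, j < i → a i = b i

/-- Reindexing of a tuple `f : Fin n → ℕ` (with `f ⟨m-1⟩` giving the part with subscript `m`)
as a function `ℕ → ℕ` supported on `{1, …, n}`. -/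
def toFun (n : ℕ) (f : Fin n → ℕ) : ℕ → ℕ :=
  fun m => if h : 1 ≤ m ∧ m ≤ n then f ⟨m - 1, by omega⟩ else 0

lemma zbinom_self {a : ℤ} (h : 0 ≤ a) : zbinom a a = 1 := by
  obtain ⟨n, rfl⟩ := Int.eq_ofNat_of_zero_le h
  simp [zbinom, Ring.choose_natCast]

lemma zbinom_eq_zero {a b : ℤ} (ha : 0 ≤ a) (h : a < b) : zbinom a b = 0 := by
  obtain ⟨n, rfl⟩ := Int.eq_ofNat_of_zero_le ha
  have hb : 0 ≤ b := le_of_lt (lt_of_le_of_lt ha h)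
  obtain ⟨m, rfl⟩ := Int.eq_ofNat_of_zero_le hb
  have : n < m := by exact_mod_cast h
  simp [zbinom, Ring.choose_natCast, Nat.choose_eq_zero_of_lt this]

lemma Sfun_nonneg (lam mu : ℕ → ℕ) (s : ℕ) : 0 ≤ Sfun lam mu s := by
  apply Finset.sum_nonneg
  intro i _
  positivity

lemma part1 (d t : ℕ) (lam mu : ℕ → ℕ)
    (hl : (∑ m ∈ Finset.Icc 1 t, (lam m : ℤ)) = (d : ℤ) - t + 1)
    (hm : (∑ m ∈ Finset.Icc 1 t, (mu m : ℤ)) = (d : ℤ) - t + 1)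
    (hs : succeq t lam mu) (hne : ¬ (∀ j ∈ Finset.Icc 1 t, lam j = mu j)) :
    Amat d t lam mu = 0 := by
  rcases hs with h | ⟨j, hj, hjlt, htail⟩
  · exact absurd h hne
  simp only [Finset.mem_Icc] at hj
  -- there is an index i < j with mu i < lam i
  have hex : ∃ i, 1 ≤ i ∧ i < j ∧ mu i < lam i := by
    by_contra hcon
    push_neg at hcon
    have hlt : (∑ m ∈ Finset.Icc 1 t, (lam m : ℤ)) < ∑ m ∈ Finset.Icc 1 t, (mu m : ℤ) := by
      apply Finset.sum_lt_sum
      · intro m hmm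
        simp only [Finset.mem_Icc] at hmm
        rcases lt_trichotomy m j with hmj | rfl | hmj
        · exact_mod_cast hcon m hmm.1 hmj
        · exact_mod_cast hjlt.le
        · exact le_of_eq (by exact_mod_cast htail m (Finset.mem_Icc.mpr hmm) hmj)
      · exact ⟨j, Finset.mem_Icc.mpr hj, by exact_mod_cast hjlt⟩
    omega
  obtain ⟨i, hi1, hij, hmuilt⟩ := hex
  have hAfun : Afun lam mu t = 0 := by
    apply Finset.prod_eq_zero (i := i - 1)
    · exact Finset.mem_range.mpr (by omega)
    · have hi : i - 1 + 1 = i := by omega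
      rw [hi]
      apply zbinom_eq_zero
      · have := Sfun_nonneg lam mu (i - 1)
        positivity
      · have : (mu i : ℤ) < (lam i : ℤ) := by exact_mod_cast hmuilt
        linarith
  simp [Amat, hAfun]

lemma part2 (d t : ℕ) (lam : ℕ → ℕ) : Amat d t lam lam = (-1 : ℤ) ^ (d - lam t) := by
  have hAfun : Afun lam lam t = 1 := by
    apply Finset.prod_eq_one
    intro s _
    apply zbinom_self
    have := Sfun_nonneg lam lam s
    positivity
  simp [Amat, hAfun]

lemma toFun_sum (t : ℕ) (f : Fin t → ℕ) :
    ∑ m ∈ Finset.Icc 1 t, (toFun t f m : ℤ) = ∑ i : Fin t, (f i : ℤ) := by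
  symm
  apply Finset.sum_bij (fun (a : Fin t) _ => a.1 + 1)
  · intro a _
    simp only [Finset.mem_Icc]
    have := a.2
    omega
  · intro a _ b _ h
    exact Fin.ext (by omega)
  · intro b hb
    simp only [Finset.mem_Icc] at hb
    exact ⟨⟨b - 1, by omega⟩, Finset.mem_univ _, by simp; omega⟩
  · intro a _
    have h : 1 ≤ a.1 + 1 ∧ a.1 + 1 ≤ t := ⟨by omega, a.2⟩
    simp only [toFun, dif_pos h]
    norm_num

/-- Lemma 3.4: for weak compositions `λ, μ` of `d-t+1` with `t` parts, `α(λ,μ) = 0`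
whenever `λ ⪰ μ` and `λ ≠ μ`, and `α(λ,λ) = (-1)^{d-λ_t}`; in particular the matrix
`(α(λ,μ))` is upper triangular with diagonal entries `±1`, hence invertible over `ℤ`. -/
theorem stmt10 (d t : ℕ) (ht : 1 ≤ t) (htd : t ≤ d + 1) :
    (∀ lam mu : ℕ → ℕ,
      (∑ m ∈ Finset.Icc 1 t, (lam m : ℤ)) = (d : ℤ) - t + 1 →
      (∑ m ∈ Finset.Icc 1 t, (mu m : ℤ)) = (d : ℤ) - t + 1 →
      succeq t lam mu → ¬ (∀ j ∈ Finset.Icc 1 t, lam j = mu j) →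
      Amat d t lam mu = 0) ∧
    (∀ lam : ℕ → ℕ,
      (∑ m ∈ Finset.Icc 1 t, (lam m : ℤ)) = (d : ℤ) - t + 1 →
      Amat d t lam lam = (-1 : ℤ) ^ (d - lam t)) ∧
    IsUnit (Matrix.of
      (fun lam mu : {a // a ∈ Finset.Nat.antidiagonalTuple t (d + 1 - t)} =>
        Amat d t (toFun t lam.1) (toFun t mu.1))) := by
  refine ⟨fun lam mu hl hm hs hne => part1 d t lam mu hl hm hs hne,
    fun lam _ => part2 d t lam, ?_⟩
  set I := {a // a ∈ Finset.Nat.antidiagonalTuple t (d + 1 - t)}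
  -- the sum property
  have hsum : ∀ a : I, (∑ m ∈ Finset.Icc 1 t, (toFun t a.1 m : ℤ)) = (d : ℤ) - t + 1 := by
    intro a
    rw [toFun_sum]
    have h0 := Finset.Nat.mem_antidiagonalTuple.mp a.2
    have h2 : (∑ i : Fin t, (a.1 i : ℤ)) = ((d + 1 - t : ℕ) : ℤ) := by
      rw [← Nat.cast_sum, h0]
    rw [h2]
    omega
  -- linear order on I
  haveI : WellFoundedLT (Fin t) := Finite.to_wellFoundedLT
  let f : I → Lex (Fin t → ℕᵒᵈ) := fun a => toLex (fun i => OrderDual.toDual (a.1 i.rev))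
  have hinj : Function.Injective f := by
    intro a b hab
    have h : ∀ i : Fin t, a.1 i.rev = b.1 i.rev := fun i => congrFun hab i
    apply Subtype.ext
    funext j
    have := h j.rev
    rwa [Fin.rev_rev] at this
  letI : LinearOrder I := LinearOrder.lift' f hinj
  -- triangularity
  have htri : ∀ lam mu : I, f mu < f lam →
      Matrix.of (fun lam mu : I => Amat d t (toFun t lam.1) (toFun t mu.1)) lam mu = 0 := by
    intro lam mu hflt
    simp only [Matrix.of_apply]
    obtain ⟨k, hk1, hk2⟩ := hflt
    -- f mu k < f lam k in ℕᵒᵈ means lam.1 k.rev < mu.1 k.rev in ℕ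
    have hk2' : (lam.1 k.rev : ℕ) < mu.1 k.rev := hk2
    set j : ℕ := t - (k : ℕ) with hjdef
    have hkt : (k : ℕ) < t := k.2
    have hjIcc : j ∈ Finset.Icc 1 t := Finset.mem_Icc.mpr ⟨by omega, by omega⟩
    have hjrev : (⟨j - 1, by omega⟩ : Fin t) = k.rev := by
      apply Fin.ext
      simp [Fin.rev, hjdef]
      omega
    apply part1 d t _ _ (hsum lam) (hsum mu)
    · right
      refine ⟨j, hjIcc, ?_, ?_⟩
      · have h1 : 1 ≤ j ∧ j ≤ t := ⟨by omega, by omega⟩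
        simp only [toFun, dif_pos h1, hjrev]
        exact hk2'
      · intro i hi hji
        simp only [Finset.mem_Icc] at hi
        have h1 : 1 ≤ i ∧ i ≤ t := hi
        simp only [toFun, dif_pos h1]
        have hrevlt : ((⟨i - 1, by omega⟩ : Fin t)).rev < k := by
          simp only [Fin.lt_def, Fin.rev]
          omega
        have h2 := hk1 ((⟨i - 1, by omega⟩ : Fin t)).rev hrevlt
        have h3 : mu.1 ((⟨i - 1, by omega⟩ : Fin t)).rev.rev
            = lam.1 ((⟨i - 1, by omega⟩ : Fin t)).rev.rev := by
          exact_mod_cast OrderDual.toDual_inj.mp h2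
        rw [Fin.rev_rev] at h3
        exact h3.symm
    · intro hall
      have := hall j hjIcc
      have h1 : 1 ≤ j ∧ j ≤ t := ⟨by omega, by omega⟩
      simp only [toFun, dif_pos h1, hjrev] at this
      omega
  rw [Matrix.isUnit_iff_isUnit_det,
    Matrix.det_of_upperTriangular (fun i j h => htri i j (show f j < f i from h))]
  apply Finset.prod_induction _ IsUnit (fun a b ha hb => ha.mul hb) isUnit_one
  intro a _
  simp only [Matrix.of_apply, id]
  rw [part2]
  exact (IsUnit.neg isUnit_one).pow _
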